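/- arXiv:2311.01600 — 3 statements merged into one kernel-verified Lean document; each statement's English description precedes it below -/
import Mathlib

section
/- Let (Ω, P) be a probability space, let B : Ω → ℝ be a random variable, let M ≥ 1, and let Ω₁,…,Ω_M be pairwise disjoint events. Let l₁,…,l_M and leak₁,…,leak_M be real numbers such that the sequence i ↦ l_i + leak_i is non-increasing, and let θ ∈ ℝ. Let T_p := { i : l_i > 0 }, and suppose that for every i ∈ T_p the event Ω_i is contained in the event { B ≥ l_i + leak_i + θ }. Then for every j ∈ {1,…,M}: ∑_{i ≤ j, i ∈ T_p} P(Ω_i) ≤ P( B ≥ l_j + leak_j + θ ). -/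
open Classical MeasureTheory

theorem MeasureTheory.sum_measure_le_of_pairwiseDisjoint_of_subset {α ι : Type*}
    [MeasurableSpace α] {μ : Measure α} {s : Finset ι} {E : ι → Set α} {t : Set α}
    (hE : ∀ i ∈ s, MeasurableSet (E i)) (hd : (s : Set ι).PairwiseDisjoint E)
    (hsub : ∀ i ∈ s, E i ⊆ t) :
    ∑ i ∈ s, μ (E i) ≤ μ t := by
  rw [← measure_biUnion_finset hd hE]
  exact measure_mono (Set.iUnion₂_subset hsub)

theorem sum_prob_nontrivial_events_le_general {Ω : Type*} [MeasurableSpace Ω]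
    (P : Measure Ω)
    (B : Ω → ℝ)
    (M : ℕ)
    (Ωi : Fin M → Set Ω) (hmeas : ∀ i, MeasurableSet (Ωi i))
    (hdisj : ∀ i j : Fin M, i ≠ j → Disjoint (Ωi i) (Ωi j))
    (l leak : Fin M → ℝ)
    (hmono : ∀ i j : Fin M, i ≤ j → l j + leak j ≤ l i + leak i)
    (θ : ℝ)
    (hsub : ∀ i : Fin M, 0 < l i → Ωi i ⊆ {ω | l i + leak i + θ ≤ B ω})
    (j : Fin M) :
    ∑ i ∈ Finset.univ.filter (fun i : Fin M => i ≤ j ∧ 0 < l i), P (Ωi i)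
      ≤ P {ω | l j + leak j + θ ≤ B ω} := by
  refine sum_measure_le_of_pairwiseDisjoint_of_subset (fun i _ => hmeas i)
    (fun i _ i' _ hii' => hdisj i i' hii') fun i hi => ?_
  obtain ⟨hij, hli⟩ := (Finset.mem_filter.mp hi).2
  intro ω hω
  have hBi : l i + leak i + θ ≤ B ω := hsub i hli hω
  show l j + leak j + θ ≤ B ω
  linarith [hmono i j hij]

/-- Lemma 3: if on each event `Ωi i` with nontrivial key length (`0 < l i`) the
estimator `B` is at least `l i + leak i + θ`, and `i ↦ l i + leak i` is
non-increasing, then the total probability of the nontrivial events up to `j`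
is bounded by the probability that `B ≥ l j + leak j + θ`. -/
theorem sum_prob_nontrivial_events_le {Ω : Type*} [MeasurableSpace Ω]
    (P : Measure Ω) [IsProbabilityMeasure P]
    (B : Ω → ℝ) (hB : Measurable B)
    (M : ℕ) (hM : 1 ≤ M)
    (Ωi : Fin M → Set Ω) (hmeas : ∀ i, MeasurableSet (Ωi i))
    (hdisj : ∀ i j : Fin M, i ≠ j → Disjoint (Ωi i) (Ωi j))
    (l leak : Fin M → ℝ)
    (hmono : ∀ i j : Fin M, i ≤ j → l j + leak j ≤ l i + leak i)
    (θ : ℝ)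
    (hsub : ∀ i : Fin M, 0 < l i → Ωi i ⊆ {ω | l i + leak i + θ ≤ B ω})
    (j : Fin M) :
    ∑ i ∈ Finset.univ.filter (fun i : Fin M => i ≤ j ∧ 0 < l i), P (Ωi i)
      ≤ P {ω | l j + leak j + θ ≤ B ω} :=
  sum_prob_nontrivial_events_le_general P B M Ωi hmeas hdisj l leak hmono θ hsub j
end

section
/- Let (Ω, P) be a finite probability space, let n ∈ ℕ, and for each k ∈ {0,1,…,n} let Ω_k ⊆ Ω be pairwise disjoint events (the event that a key of length k is produced). Let K_A, K_B be random variables which, on the event Ω_k, take values in {0,1}^k, let C be a random variable with values in a finite set 𝒞, and let Ω_EV ⊆ Ω be an event with Ω_k ⊆ Ω_EV for every k (a key is only produced if error-verification passes). Suppose: (correctness) P( K_A ≠ K_B ∧ Ω_EV ) ≤ ε₁; and (secrecy) ∑_{k=0}^{n} (1/2) P(Ω_k) · ∑_{(s,c) ∈ {0,1}^k × 𝒞} | P(K_A = s, C = c | Ω_k) − 2^{−k} P(C = c | Ω_k) | ≤ ε₂. Then (security): ∑_{k=0}^{n} (1/2) P(Ω_k) · ∑_{(s,s',c) ∈ {0,1}^k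 × {0,1}^k × 𝒞} | P(K_A = s, K_B = s', C = c | Ω_k) − [s = s'] · 2^{−k} P(C = c | Ω_k) | ≤ ε₁ + ε₂, where [s = s'] equals 1 if s = s' and 0 otherwise. -/
/-!
Fix a key length `k`. On the diagonal `s = s'` the triangle inequality through
`P(K_A = s, C = c, Ω_k)` gives
`|P(K_A = K_B = s, c, Ω_k) - ideal| ≤ P(K_A = s ≠ K_B, c, Ω_k) + |P(K_A = s, c, Ω_k) - ideal|`,
and off the diagonal the ideal term vanishes. Both error terms are masses of disjoint pieces of
`{K_A ≠ K_B} ∩ Ω_k`, so the `k`-th security term is at most `P(K_A ≠ K_B, Ω_k)` plus the `k`-th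
secrecy term. Since the `Ω_k` are disjoint subsets of `Ω_EV`, the mismatch masses add up to at
most `P(K_A ≠ K_B, Ω_EV) ≤ ε₁`.
-/

open Finset Function

namespace Finset

variable {Ω : Type*} {S : Finset Ω} {P : Ω → ℝ}

theorem sum_sum_filter_eq_comp_le_sum {ι κ : Type*} [Fintype ι] [DecidableEq κ]
    (hP : ∀ ω ∈ S, 0 ≤ P ω) (g : Ω → κ) {e : ι → κ} (he : Injective e) :
    ∑ i, ∑ ω ∈ S with g ω = e i, P ω ≤ ∑ ω ∈ S, P ω := by
  refine (sum_map univ ⟨e, he⟩ fun y => ∑ ω ∈ S with g ω = y, P ω).symm.trans_le ?_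
  exact sum_fiberwise_le_sum_of_sum_fiber_nonneg fun y _ =>
    sum_nonneg fun ω hω => hP ω (mem_filter.1 hω).1

theorem sum_sum_le_sum_of_pairwiseDisjoint {ι : Type*} {s : Finset ι} {t : ι → Finset Ω}
    {T : Finset Ω} (hP : ∀ ω ∈ T, 0 ≤ P ω) (hdisj : (s : Set ι).PairwiseDisjoint t)
    (hsub : ∀ i ∈ s, t i ⊆ T) :
    ∑ i ∈ s, ∑ ω ∈ t i, P ω ≤ ∑ ω ∈ T, P ω := by
  classical
  rw [← sum_biUnion hdisj]
  exact sum_le_sum_of_subset_of_nonneg (biUnion_subset.2 hsub) fun ω hω _ => hP ω hω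

variable {α β γ : Type*} [Fintype α] [Fintype γ] [DecidableEq β] [DecidableEq γ]

theorem sum_sum_filter_pair_le_sum (hP : ∀ ω ∈ S, 0 ≤ P ω) (X : Ω → β) (Z : Ω → γ)
    {e : α → β} (he : Injective e) :
    ∑ a, ∑ c, ∑ ω ∈ S with X ω = e a ∧ Z ω = c, P ω ≤ ∑ ω ∈ S, P ω := by
  have := sum_sum_filter_eq_comp_le_sum hP (fun ω => (X ω, Z ω)) (he.prodMap injective_id)
  simpa only [Fintype.sum_prod_type, Prod.map_apply, id, Prod.mk.injEq] using this

theorem sum_sum_sum_filter_triple_le_sum (hP : ∀ ω ∈ S, 0 ≤ P ω) (X Y : Ω → β) (Z : Ω → γ)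
    {e : α → β} (he : Injective e) :
    ∑ a, ∑ b, ∑ c, ∑ ω ∈ S with X ω = e a ∧ Y ω = e b ∧ Z ω = c, P ω ≤ ∑ ω ∈ S, P ω := by
  have := sum_sum_filter_eq_comp_le_sum hP (fun ω => (X ω, Y ω, Z ω))
    (he.prodMap (he.prodMap injective_id))
  simpa only [Fintype.sum_prod_type, Prod.map_apply, id, Prod.mk.injEq] using this

theorem sum_sum_erase_sum_filter_le_sum_filter_ne [DecidableEq α] (hP : ∀ ω ∈ S, 0 ≤ P ω)
    (X Y : Ω → β) (Z : Ω → γ) {e : α → β} (he : Injective e) :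
    ∑ a, ∑ b ∈ univ.erase a, ∑ c, ∑ ω ∈ S with X ω = e a ∧ Y ω = e b ∧ Z ω = c, P ω
      ≤ ∑ ω ∈ S with X ω ≠ Y ω, P ω := by
  have hP' : ∀ ω ∈ S.filter (fun ω => X ω ≠ Y ω), 0 ≤ P ω :=
    fun ω hω => hP ω (mem_filter.1 hω).1
  calc ∑ a, ∑ b ∈ univ.erase a, ∑ c, ∑ ω ∈ S with X ω = e a ∧ Y ω = e b ∧ Z ω = c, P ω
      = ∑ a, ∑ b ∈ univ.erase a, ∑ c,
          ∑ ω ∈ {ω ∈ S | X ω ≠ Y ω} with X ω = e a ∧ Y ω = e b ∧ Z ω = c, P ω := by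
        refine sum_congr rfl fun a _ => sum_congr rfl fun b hb => sum_congr rfl fun c _ => ?_
        have hab : e a ≠ e b := he.ne (ne_of_mem_erase hb).symm
        rw [filter_filter]
        exact sum_congr (filter_congr fun ω _ => by grind) fun _ _ => rfl
    _ ≤ ∑ a, ∑ b, ∑ c, ∑ ω ∈ {ω ∈ S | X ω ≠ Y ω} with X ω = e a ∧ Y ω = e b ∧ Z ω = c, P ω :=
        sum_le_sum fun a _ => sum_le_sum_of_subset_of_nonneg (subset_univ _) fun b _ _ =>
          sum_nonneg fun c _ => sum_nonneg fun ω hω => hP' ω (mem_filter.1 hω).1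
    _ ≤ ∑ ω ∈ S with X ω ≠ Y ω, P ω := sum_sum_sum_filter_triple_le_sum hP' X Y Z he

omit [Fintype γ] in
theorem sum_filter_eq_add_sum_filter_ne (X Y : Ω → β) (Z : Ω → γ) (x : β) (c : γ) :
    ∑ ω ∈ S with X ω = x ∧ Z ω = c, P ω
      = ∑ ω ∈ S with X ω = x ∧ Y ω = x ∧ Z ω = c, P ω
        + ∑ ω ∈ {ω ∈ S | X ω ≠ Y ω} with X ω = x ∧ Z ω = c, P ω := by
  rw [← sum_filter_add_sum_filter_not (S.filter _) fun ω => Y ω = x, filter_filter,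
    filter_filter, filter_filter]
  congr 1 <;> exact sum_congr (filter_congr fun ω _ => by grind) fun _ _ => rfl

end Finset

theorem sum_abs_joint_sub_diagonal_le {Ω α β γ : Type*} [Fintype α] [Fintype γ] [DecidableEq α]
    [DecidableEq β] [DecidableEq γ] {S : Finset Ω} {P : Ω → ℝ} (hP : ∀ ω ∈ S, 0 ≤ P ω) (X Y : Ω → β) (Z : Ω → γ)
    {e : α → β} (he : Injective e) (I : γ → ℝ) :
    ∑ a, ∑ b, ∑ c,
        |∑ ω ∈ S with X ω = e a ∧ Y ω = e b ∧ Z ω = c, P ω - if a = b then I c else 0|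
      ≤ 2 * ∑ ω ∈ S with X ω ≠ Y ω, P ω
        + ∑ a, ∑ c, |∑ ω ∈ S with X ω = e a ∧ Z ω = c, P ω - I c| := by
  set S' := S.filter fun ω => X ω ≠ Y ω
  set T := fun a b c => ∑ ω ∈ S with X ω = e a ∧ Y ω = e b ∧ Z ω = c, P ω
  set A := fun a c => ∑ ω ∈ S with X ω = e a ∧ Z ω = c, P ω
  set D := fun a c => ∑ ω ∈ S' with X ω = e a ∧ Z ω = c, P ω
  have hP' : ∀ ω ∈ S', 0 ≤ P ω := fun ω hω => hP ω (mem_filter.1 hω).1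
  have hT : ∀ a b c, 0 ≤ T a b c := fun a b c =>
    sum_nonneg fun ω hω => hP ω (mem_filter.1 hω).1
  have hdiag : ∀ a c, |T a a c - I c| ≤ D a c + |A a c - I c| := by
    intro a c
    have hA : A a c = T a a c + D a c := sum_filter_eq_add_sum_filter_ne X Y Z (e a) c
    have hD : 0 ≤ D a c := sum_nonneg fun ω hω => hP' ω (mem_filter.1 hω).1
    calc |T a a c - I c| ≤ |T a a c - A a c| + |A a c - I c| := abs_sub_le _ _ _
      _ = D a c + |A a c - I c| := by
        rw [hA, sub_add_cancel_left, abs_neg, abs_of_nonneg hD]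
  have hoff : ∑ a, ∑ b ∈ univ.erase a, ∑ c, T a b c ≤ ∑ ω ∈ S', P ω :=
    sum_sum_erase_sum_filter_le_sum_filter_ne hP X Y Z he
  have hmis : ∑ a, ∑ c, D a c ≤ ∑ ω ∈ S', P ω := sum_sum_filter_pair_le_sum hP' X Z he
  calc ∑ a, ∑ b, ∑ c, |T a b c - if a = b then I c else 0|
      = ∑ a, (∑ c, |T a a c - I c| + ∑ b ∈ univ.erase a, ∑ c, T a b c) := by
        refine sum_congr rfl fun a _ => ?_
        rw [← add_sum_erase _ _ (mem_univ a)]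
        simp only [↓reduceIte]
        congr 1
        refine sum_congr rfl fun b hb => sum_congr rfl fun c _ => ?_
        rw [if_neg (ne_of_mem_erase hb).symm, sub_zero, abs_of_nonneg (hT a b c)]
    _ ≤ ∑ a, (∑ c, (D a c + |A a c - I c|) + ∑ b ∈ univ.erase a, ∑ c, T a b c) := by
        gcongr with a _ c
        exact hdiag a c
    _ = ∑ a, ∑ c, D a c + ∑ a, ∑ b ∈ univ.erase a, ∑ c, T a b c
          + ∑ a, ∑ c, |A a c - I c| := by
        simp only [sum_add_distrib]
        ring
    _ ≤ _ := by linarith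

theorem correct_and_secret_implies_secure_general
    {Ω C : Type*} [Fintype Ω] [Fintype C] [DecidableEq C]
    (P : Ω → ℝ) (hP0 : ∀ ω, 0 ≤ P ω)
    (n : ℕ) (Ωk : Fin (n + 1) → Finset Ω)
    (hdisj : ∀ k k' : Fin (n + 1), k ≠ k' → Disjoint (Ωk k) (Ωk k'))
    (KA KB : Ω → (Σ k : Fin (n + 1), Fin (k : ℕ) → Bool))
    (Cr : Ω → C) (ΩEV : Finset Ω)
    (hEV : ∀ k, Ωk k ⊆ ΩEV)
    (ε₁ ε₂ : ℝ)
    (hcorr : ∑ ω ∈ ΩEV.filter (fun ω => KA ω ≠ KB ω), P ω ≤ ε₁)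
    (hsecr : ∑ k : Fin (n + 1), (1 / 2) *
        ∑ s : Fin (k : ℕ) → Bool, ∑ c : C,
          |(∑ ω ∈ (Ωk k).filter (fun ω => KA ω = ⟨k, s⟩ ∧ Cr ω = c), P ω)
            - (1 / 2) ^ (k : ℕ) * ∑ ω ∈ (Ωk k).filter (fun ω => Cr ω = c), P ω| ≤ ε₂) :
    ∑ k : Fin (n + 1), (1 / 2) *
        ∑ s : Fin (k : ℕ) → Bool, ∑ s' : Fin (k : ℕ) → Bool, ∑ c : C,
          |(∑ ω ∈ (Ωk k).filter
                (fun ω => KA ω = ⟨k, s⟩ ∧ KB ω = ⟨k, s'⟩ ∧ Cr ω = c), P ω)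
            - (if s = s' then
                (1 / 2) ^ (k : ℕ) * ∑ ω ∈ (Ωk k).filter (fun ω => Cr ω = c), P ω
              else 0)| ≤ ε₁ + ε₂ := by
  have hmismatch : ∑ k, ∑ ω ∈ (Ωk k).filter (fun ω => KA ω ≠ KB ω), P ω ≤ ε₁ :=
    (sum_sum_le_sum_of_pairwiseDisjoint (fun ω _ => hP0 ω)
      (fun k _ k' _ hkk' => (hdisj k k' hkk').mono (filter_subset _ _) (filter_subset _ _))
      (fun k _ => filter_subset_filter _ (hEV k))).trans hcorr
  refine (sum_le_sum fun k _ => ?_).trans (sum_add_distrib.trans_le (add_le_add hmismatch hsecr))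
  linarith [sum_abs_joint_sub_diagonal_le (S := Ωk k) (fun ω _ => hP0 ω) KA KB Cr
    (sigma_mk_injective (i := k))
    fun c => (1 / 2) ^ (k : ℕ) * ∑ ω ∈ (Ωk k).filter (fun ω => Cr ω = c), P ω]

/-- Classical analogue of Lemma 4: for a variable-length protocol,
`ε₁`-correctness and `ε₂`-secrecy together imply `(ε₁+ε₂)`-security.
Keys of length `k` are modelled as elements `⟨k, s⟩` of the sigma type
`Σ k : Fin (n+1), Fin k → Bool`; weighted conditional distances
`P(Ω_k)·|P(·|Ω_k) − ideal|` are written as `|P(· ∧ Ω_k) − ideal·P(Ω_k)|`,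
so terms with `P(Ω_k) = 0` vanish. -/
theorem correct_and_secret_implies_secure
    {Ω C : Type*} [Fintype Ω] [Fintype C] [DecidableEq C] [Nonempty C]
    (P : Ω → ℝ) (hP0 : ∀ ω, 0 ≤ P ω) (hP1 : ∑ ω, P ω = 1)
    (n : ℕ) (Ωk : Fin (n + 1) → Finset Ω)
    (hdisj : ∀ k k' : Fin (n + 1), k ≠ k' → Disjoint (Ωk k) (Ωk k'))
    (KA KB : Ω → (Σ k : Fin (n + 1), Fin (k : ℕ) → Bool))
    (Cr : Ω → C) (ΩEV : Finset Ω)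
    (hEV : ∀ k, Ωk k ⊆ ΩEV)
    (hKA : ∀ k, ∀ ω ∈ Ωk k, (KA ω).1 = k)
    (hKB : ∀ k, ∀ ω ∈ Ωk k, (KB ω).1 = k)
    (ε₁ ε₂ : ℝ)
    (hcorr : ∑ ω ∈ ΩEV.filter (fun ω => KA ω ≠ KB ω), P ω ≤ ε₁)
    (hsecr : ∑ k : Fin (n + 1), (1 / 2) *
        ∑ s : Fin (k : ℕ) → Bool, ∑ c : C,
          |(∑ ω ∈ (Ωk k).filter (fun ω => KA ω = ⟨k, s⟩ ∧ Cr ω = c), P ω)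
            - (1 / 2) ^ (k : ℕ) * ∑ ω ∈ (Ωk k).filter (fun ω => Cr ω = c), P ω| ≤ ε₂) :
    ∑ k : Fin (n + 1), (1 / 2) *
        ∑ s : Fin (k : ℕ) → Bool, ∑ s' : Fin (k : ℕ) → Bool, ∑ c : C,
          |(∑ ω ∈ (Ωk k).filter
                (fun ω => KA ω = ⟨k, s⟩ ∧ KB ω = ⟨k, s'⟩ ∧ Cr ω = c), P ω)
            - (if s = s' then
                (1 / 2) ^ (k : ℕ) * ∑ ω ∈ (Ωk k).filter (fun ω => Cr ω = c), P ω
              else 0)| ≤ ε₁ + ε₂ :=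
  correct_and_secret_implies_secure_general P hP0 n Ωk hdisj KA KB Cr ΩEV hEV ε₁ ε₂ hcorr hsecr
end

section
/- Let Σ be a nonempty finite alphabet, let α be a type of models, let Φ : α → (probability distributions on Σ), let h : α → ℝ be bounded below, and fix a₀ ∈ α. Let m ≥ 1, ε_AT ∈ (0,1], and μ := √(2 (ln(1/ε_AT) + |Σ|·ln(m+1)) / m). Let F_obs be the empirical frequency distribution of m i.i.d. samples from Φ(a₀), and define the estimator b(F) := inf { h(a) : a ∈ α, ∑_{x∈Σ} |Φ(a)(x) − F(x)| ≤ μ }. Then with probability at least 1 − ε_AT over the samples, b(F_obs) ≤ h(a₀). -/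
/-! If the empirical frequencies `F` of the sample are within the confidence radius `r` of the
true distribution `P = Φ a₀` in ℓ₁, then `a₀` lies in the confidence set and the estimator is at
most `h a₀`. As `P` and `F` both have mass one, `‖P - F‖₁ = 2 max_S (F S - P S)`, so
`‖P - F‖₁ > r` forces `F S ≥ P S + r / 2` for some `S ⊆ A`. By Hoeffding's inequality each of
these events has probability at most `exp (-m r² / 2)`, and `r` is chosen so that the union bound
over the `2 ^ |A|` subsets is at most `ε`. -/

open MeasureTheory ProbabilityTheory Real Finset

lemma measureReal_pi_sum_indicator_ge_le {Ω ι : Type*} [MeasurableSpace Ω] [Fintype ι]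
    (ν : Measure Ω) [IsProbabilityMeasure ν] {S : Set Ω} (hS : MeasurableSet S) {t : ℝ}
    (ht : 0 ≤ t) :
    (Measure.pi fun _ : ι => ν).real
        {ω | Fintype.card ι * (ν.real S + t) ≤ ∑ i, S.indicator 1 (ω i)}
      ≤ exp (-(2 * Fintype.card ι * t ^ 2)) := by
  have hmeas : Measurable (S.indicator (1 : Ω → ℝ)) := measurable_const.indicator hS
  have hsubG : HasSubgaussianMGF (fun x => S.indicator 1 x - ν.real S)
      ((‖(1 : ℝ) - 0‖₊ / 2) ^ 2) ν := by
    have := hasSubgaussianMGF_of_mem_Icc (μ := ν) (a := 0) (b := 1) hmeas.aemeasurable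
      (.of_forall fun x => ⟨Set.indicator_nonneg (fun _ _ => zero_le_one) x,
        Set.indicator_le_self' (fun _ _ => zero_le_one) x⟩)
    rwa [integral_indicator_one hS] at this
  have hindep := iIndepFun_pi (μ := fun _ : ι => ν)
    (X := fun _ x => S.indicator 1 x - ν.real S) fun _ => (hmeas.sub_const _).aemeasurable
  have hoeffding := HasSubgaussianMGF.measure_sum_ge_le_of_iIndepFun hindep (s := univ)
    (ε := Fintype.card ι * t) (c := fun _ => (‖(1 : ℝ) - 0‖₊ / 2) ^ 2)
    (fun i _ => HasSubgaussianMGF.of_map (X := fun x => S.indicator 1 x - ν.real S)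
      (measurable_pi_apply i).aemeasurable
      (by rwa [(measurePreserving_eval (fun _ : ι => ν) i).map_eq])) (by positivity)
  convert hoeffding using 2
  · ext ω
    simp only [Set.mem_ofPred_eq, sum_sub_distrib, sum_const, card_univ, nsmul_eq_mul]
    constructor <;> intro h <;> linarith
  · rcases isEmpty_or_nonempty ι with _ | _
    · simp
    · simp only [sub_zero, nnnorm_one, sum_const, card_univ, nsmul_eq_mul]
      push_cast
      field_simp

lemma sum_abs_sub_eq_two_mul_sum_filter_lt {A : Type*} [Fintype A] {P Q : A → ℝ}
    (h : ∑ x, P x = ∑ x, Q x) :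
    ∑ x, |P x - Q x| = 2 * ∑ x with P x < Q x, (Q x - P x) := by
  have habs : ∀ x, |P x - Q x| = 2 * (if P x < Q x then Q x - P x else 0) - (Q x - P x) := by
    intro x
    split_ifs with hx
    · rw [abs_of_neg (by linarith)]; ring
    · rw [abs_of_nonneg (by linarith)]; ring
  rw [sum_filter]
  simp only [habs, sum_sub_distrib, ← mul_sum, h, sub_self, sub_zero]

section Empirical

variable {A : Type*} [DecidableEq A]

noncomputable def empiricalFreq {m : ℕ} (ω : Fin m → A) (x : A) : ℝ := #{i | ω i = x} / m

lemma sum_empiricalFreq {m : ℕ} (ω : Fin m → A) (S : Finset A) :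
    ∑ x ∈ S, empiricalFreq ω x = (∑ i, (S : Set A).indicator 1 (ω i)) / m := by
  simp only [empiricalFreq, ← sum_div, card_filter]
  push_cast
  rw [sum_comm]
  congr 1
  refine sum_congr rfl fun i _ => ?_
  simp [Set.indicator_apply, sum_ite_eq]

variable [Fintype A]

lemma sum_empiricalFreq_univ {m : ℕ} (hm : 0 < m) (ω : Fin m → A) :
    ∑ x, empiricalFreq ω x = 1 := by
  rw [sum_empiricalFreq]
  simp [hm.ne']

lemma measureReal_pi_lt_sum_abs_sub_empiricalFreq_le [MeasurableSpace A]
    [MeasurableSingletonClass A] (ν : Measure A) [IsProbabilityMeasure ν]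
    {m : ℕ} (hm : 0 < m) {r : ℝ} (hr : 0 ≤ r) :
    (Measure.pi fun _ : Fin m => ν).real {ω | r < ∑ x, |ν.real {x} - empiricalFreq ω x|}
      ≤ 2 ^ Fintype.card A * exp (-(m * r ^ 2 / 2)) := by
  have hsub : {ω : Fin m → A | r < ∑ x, |ν.real {x} - empiricalFreq ω x|} ⊆
      ⋃ S : Finset A, {ω | m * (ν.real S + r / 2) ≤ ∑ i, (S : Set A).indicator 1 (ω i)} := by
    intro ω hω
    have htotal : ∑ x, ν.real {x} = ∑ x, empiricalFreq ω x := by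
      rw [sum_empiricalFreq_univ hm, sum_measureReal_singleton, coe_univ, probReal_univ]
    rw [Set.mem_ofPred_eq, sum_abs_sub_eq_two_mul_sum_filter_lt htotal, sum_sub_distrib,
      sum_measureReal_singleton, sum_empiricalFreq] at hω
    refine Set.mem_iUnion.2 ⟨({x | ν.real {x} < empiricalFreq ω x} : Finset A), ?_⟩
    rw [Set.mem_ofPred_eq, ← le_div_iff₀' (by exact_mod_cast hm)]
    linarith
  calc _ ≤ _ := measureReal_mono hsub
    _ ≤ ∑ S : Finset A, (Measure.pi fun _ : Fin m => ν).real
          {ω | m * (ν.real S + r / 2) ≤ ∑ i, (S : Set A).indicator 1 (ω i)} :=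
        measureReal_iUnion_fintype_le _
    _ ≤ ∑ _S : Finset A, exp (-(2 * m * (r / 2) ^ 2)) :=
        sum_le_sum fun S _ => by
          simpa using measureReal_pi_sum_indicator_ge_le (ι := Fin m) ν S.measurableSet
            (t := r / 2) (by positivity)
    _ = 2 ^ Fintype.card A * exp (-(m * r ^ 2 / 2)) := by
        rw [sum_const, card_univ, Fintype.card_finset, nsmul_eq_mul]
        push_cast
        ring_nf

end Empirical

section FiniteMeasure

variable {A : Type*} [Fintype A] [MeasurableSpace A] [MeasurableSingletonClass A]

lemma exists_isProbabilityMeasure_measureReal_singleton_eq {P : A → ℝ} (h0 : ∀ x, 0 ≤ P x)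
    (h1 : ∑ x, P x = 1) : ∃ ν : Measure A, IsProbabilityMeasure ν ∧ ∀ x, ν.real {x} = P x := by
  let p := PMF.ofFintype (fun x => ENNReal.ofReal (P x)) (by
    rw [← ENNReal.ofReal_sum_of_nonneg fun x _ => h0 x, h1, ENNReal.ofReal_one])
  refine ⟨p.toMeasure, inferInstance, fun x => ?_⟩
  simp [measureReal_def, p, PMF.toMeasure_apply_singleton _ _ (measurableSet_singleton x), h0 x]

lemma sum_ite_prod_eq_measureReal_pi (ν : Measure A) [IsFiniteMeasure ν] {P : A → ℝ}
    (hP : ∀ x, ν.real {x} = P x) {m : ℕ} (p : (Fin m → A) → Prop) [DecidablePred p] :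
    ∑ ω, (if p ω then ∏ i, P (ω i) else 0) = (Measure.pi fun _ : Fin m => ν).real {ω | p ω} := by
  rw [← sum_filter, ← coe_filter_univ, ← sum_measureReal_singleton]
  refine sum_congr rfl fun ω _ => ?_
  simp [measureReal_def, ENNReal.toReal_prod, ← hP]

end FiniteMeasure

noncomputable def confidenceRadius (ε : ℝ) (k m : ℕ) : ℝ :=
  √(2 * (log (1 / ε) + k * log (m + 1)) / m)

lemma two_pow_mul_exp_confidenceRadius_le {ε : ℝ} (hε : 0 < ε) (k : ℕ) {m : ℕ} (hm : 1 ≤ m) :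
    2 ^ k * exp (-(m * confidenceRadius ε k m ^ 2 / 2)) ≤ ε := by
  have hm1 : (1 : ℝ) ≤ m := by exact_mod_cast hm
  have hL : log (1 / ε) + k * log (m + 1) ≤ m * confidenceRadius ε k m ^ 2 / 2 := by
    rw [confidenceRadius, sq_sqrt']
    calc log (1 / ε) + k * log (m + 1)
        = m * (2 * (log (1 / ε) + k * log (m + 1)) / m) / 2 := by field_simp
      _ ≤ _ := by gcongr; exact le_max_left _ _
  have hexp : ((m : ℝ) + 1) ^ k * exp (-(log (1 / ε) + k * log (m + 1))) = ε := by
    rw [exp_neg, exp_add, exp_log (by positivity), ← log_pow, exp_log (by positivity)]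
    field_simp
  calc 2 ^ k * exp (-(m * confidenceRadius ε k m ^ 2 / 2))
      ≤ ((m : ℝ) + 1) ^ k * exp (-(log (1 / ε) + k * log (m + 1))) := by
        gcongr
        linarith
    _ = ε := hexp

noncomputable def confidenceEstimator {A α : Type*} [Fintype A] (Φ : α → A → ℝ) (h : α → ℝ)
    (r : ℝ) (F : A → ℝ) : ℝ :=
  sInf {y | ∃ a, y = h a ∧ ∑ x, |Φ a x - F x| ≤ r}

lemma confidenceEstimator_le {A α : Type*} [Fintype A] {Φ : α → A → ℝ} {h : α → ℝ}
    (hbd : BddBelow (Set.range h)) {r : ℝ} {F : A → ℝ} {a : α} (ha : ∑ x, |Φ a x - F x| ≤ r) :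
    confidenceEstimator Φ h r F ≤ h a :=
  csInf_le (hbd.mono <| by rintro _ ⟨b, rfl, -⟩; exact ⟨b, rfl⟩) ⟨a, rfl, ha⟩

theorem estimator_lower_bounds_truth_general {A : Type*} [Fintype A] [DecidableEq A]
    {α : Type*}
    (Φ : α → A → ℝ) (hΦ0 : ∀ a x, 0 ≤ Φ a x) (hΦ1 : ∀ a, ∑ x, Φ a x = 1)
    (h : α → ℝ) (hbd : BddBelow (Set.range h)) (a₀ : α)
    (m : ℕ) (hm : 1 ≤ m) (εAT : ℝ) (hε : 0 < εAT) :
    1 - εAT ≤ ∑ ω : Fin m → A,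
      (if sInf { y | ∃ a : α, y = h a ∧
              ∑ x : A, |Φ a x - ((Finset.univ.filter (fun i => ω i = x)).card : ℝ) / m|
                ≤ Real.sqrt (2 * (Real.log (1 / εAT)
                    + (Fintype.card A : ℝ) * Real.log (m + 1)) / m) }
            ≤ h a₀
        then ∏ i, Φ a₀ (ω i) else 0) := by
  let : MeasurableSpace A := ⊤
  obtain ⟨ν, _, hνΦ⟩ := exists_isProbabilityMeasure_measureReal_singleton_eq (hΦ0 a₀) (hΦ1 a₀)
  have hbad := (measureReal_pi_lt_sum_abs_sub_empiricalFreq_le ν hm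
    (r := confidenceRadius εAT (Fintype.card A) m) (sqrt_nonneg _)).trans
    (two_pow_mul_exp_confidenceRadius_le hε _ hm)
  simp only [hνΦ] at hbad
  change 1 - εAT ≤ ∑ ω : Fin m → A, if confidenceEstimator Φ h
    (confidenceRadius εAT (Fintype.card A) m) (empiricalFreq ω) ≤ h a₀ then ∏ i, Φ a₀ (ω i) else 0
  rw [sum_ite_prod_eq_measureReal_pi ν hνΦ]
  calc 1 - εAT
      ≤ (Measure.pi fun _ : Fin m => ν).real
          {ω | confidenceRadius εAT (Fintype.card A) m < ∑ x, |Φ a₀ x - empiricalFreq ω x|}ᶜ := by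
        rw [probReal_compl_eq_one_sub .of_discrete]
        linarith
    _ ≤ _ := measureReal_mono fun ω hω => confidenceEstimator_le hbd (not_lt.1 hω)

/-- Classical abstraction of Lemmas 1 and 2: the estimator obtained by
minimizing a (bounded-below) objective `h` over the ℓ₁-confidence set of radius
`μ` around the empirical frequencies of `m` i.i.d. samples from `Φ a₀` is,
with probability at least `1 - ε_AT`, a lower bound on `h a₀`. -/
theorem estimator_lower_bounds_truth {A : Type*} [Fintype A] [Nonempty A] [DecidableEq A]
    {α : Type*}
    (Φ : α → A → ℝ) (hΦ0 : ∀ a x, 0 ≤ Φ a x) (hΦ1 : ∀ a, ∑ x, Φ a x = 1)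
    (h : α → ℝ) (hbd : BddBelow (Set.range h)) (a₀ : α)
    (m : ℕ) (hm : 1 ≤ m) (εAT : ℝ) (hε : 0 < εAT) (hε1 : εAT ≤ 1) :
    1 - εAT ≤ ∑ ω : Fin m → A,
      (if sInf { y | ∃ a : α, y = h a ∧
              ∑ x : A, |Φ a x - ((Finset.univ.filter (fun i => ω i = x)).card : ℝ) / m|
                ≤ Real.sqrt (2 * (Real.log (1 / εAT)
                    + (Fintype.card A : ℝ) * Real.log (m + 1)) / m) }
            ≤ h a₀
        then ∏ i, Φ a₀ (ω i) else 0) :=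
  estimator_lower_bounds_truth_general Φ hΦ0 hΦ1 h hbd a₀ m hm εAT hε
end
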